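/- With F_n(w) = (1/(2√w))·sqrt(c_n(w)/a_n(w))·sqrt((a_n(w)·c_n(w) − b_n(w)²)/(w·a_n(w)²)), for sufficiently large n, ∫_{1+1/n}^{1+(log n)²/n} F_n(w) dw ≤ 2·n·log log n. -/

import Mathlib

open Finset Real

noncomputable def aa (n : ℕ) (w : ℝ) : ℝ := ∑ j ∈ Finset.range (n+1), w ^ j
noncomputable def bb (n : ℕ) (w : ℝ) : ℝ := ∑ j ∈ Finset.range (n+1), (j : ℝ) * w ^ j
noncomputable def cc (n : ℕ) (w : ℝ) : ℝ := ∑ j ∈ Finset.range (n+1), (j : ℝ)^2 * w ^ j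

noncomputable def F (n : ℕ) (w : ℝ) : ℝ :=
  (1 / (2 * Real.sqrt w)) * Real.sqrt (cc n w / aa n w) *
    Real.sqrt ((aa n w * cc n w - (bb n w)^2) / (w * (aa n w)^2))

/-!
Weighting `j ∈ {0, …, n}` by `w ^ j`, the factor `√(c/a)` is the root mean square of `j`, at most `n`,
and the last factor is `σ / √w` with `σ² = (a c - b²) / a²` the variance. The variance is at most
the second moment about the endpoint `n`, and `(w - 1)³ ∑ (n - j)² w^j ≤ w^(n+1) (w + 1)`. For
`w ≥ 1 + 1/n` Bernoulli gives `w^(n+1) ≥ 2`, so `a (w - 1) = w^(n+1) - 1 ≥ w^(n+1) / 2`, whence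
`σ ≤ 2 √w / (w - 1)` and `F n w ≤ n / (w - 1)`, whose integral over the range is `2 n log log n`.
-/

open MeasureTheory

noncomputable def topMoment (n : ℕ) (w : ℝ) : ℝ := ∑ j ∈ range (n + 1), ((n : ℝ) - j) ^ 2 * w ^ j

lemma topMoment_eq (n : ℕ) (w : ℝ) :
    topMoment n w = (n : ℝ) ^ 2 * aa n w - 2 * n * bb n w + cc n w := by
  simp only [topMoment, aa, bb, cc, mul_sum, ← sum_sub_distrib, ← sum_add_distrib]
  exact sum_congr rfl fun j _ => by ring

lemma aa_mul_cc_sub_sq_le (n : ℕ) (w : ℝ) :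
    aa n w * cc n w - bb n w ^ 2 ≤ aa n w * topMoment n w := by
  rw [topMoment_eq]
  nlinarith [sq_nonneg ((n : ℝ) * aa n w - bb n w)]

lemma topMoment_succ (n : ℕ) (w : ℝ) :
    topMoment (n + 1) w = w * topMoment n w + ((n : ℝ) + 1) ^ 2 := by
  simp only [topMoment, sum_range_succ' _ (n + 1), mul_sum]
  push_cast
  congr 1
  · exact sum_congr rfl fun j _ => by ring
  · ring

lemma sub_one_pow_three_mul_topMoment (n : ℕ) (w : ℝ) :
    (w - 1) ^ 3 * topMoment n w = w ^ (n + 1) * (w + 1) - ((((n : ℝ) + 1) * w - n) ^ 2 + w) := by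
  induction n with
  | zero => simp only [topMoment, zero_add, sum_range_one]; push_cast; ring
  | succ n ih =>
    rw [topMoment_succ, mul_add, mul_left_comm, ih]
    push_cast
    ring

lemma sub_one_pow_three_mul_topMoment_le (n : ℕ) {w : ℝ} (hw : 0 ≤ w) :
    (w - 1) ^ 3 * topMoment n w ≤ w ^ (n + 1) * (w + 1) := by
  rw [sub_one_pow_three_mul_topMoment]
  nlinarith [sq_nonneg (((n : ℝ) + 1) * w - n)]

lemma two_le_pow_of_one_add_inv_le {n : ℕ} (hn : 0 < n) {w : ℝ} (hw : 1 + 1 / (n : ℝ) ≤ w) :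
    2 ≤ w ^ n := by
  have hn' : (0 : ℝ) < n := by exact_mod_cast hn
  have hw1 : 1 ≤ w := le_trans (by simp) hw
  calc (2 : ℝ) = 1 + n * (1 / n) := by field_simp; ring
    _ ≤ 1 + n * (w - 1) := by gcongr; linarith
    _ ≤ (1 + (w - 1)) ^ n := one_add_mul_le_pow (by linarith) n
    _ = w ^ n := by ring

lemma sub_one_sq_mul_topMoment_le {n : ℕ} (hn : 0 < n) {w : ℝ} (hw : 1 + 1 / (n : ℝ) ≤ w) :
    (w - 1) ^ 2 * topMoment n w ≤ 2 * (w + 1) * aa n w := by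
  have hw1 : 1 < w := (lt_add_of_pos_right 1 (by positivity)).trans_le hw
  have hgeom : aa n w * (w - 1) = w ^ (n + 1) - 1 := geom_sum_mul w (n + 1)
  have hpow : 2 ≤ w ^ (n + 1) :=
    (two_le_pow_of_one_add_inv_le hn hw).trans (pow_le_pow_right₀ hw1.le n.le_succ)
  refine le_of_mul_le_mul_left ?_ (sub_pos.mpr hw1)
  calc (w - 1) * ((w - 1) ^ 2 * topMoment n w) = (w - 1) ^ 3 * topMoment n w := by ring
    _ ≤ w ^ (n + 1) * (w + 1) := sub_one_pow_three_mul_topMoment_le n (by linarith)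
    _ ≤ 2 * (w ^ (n + 1) - 1) * (w + 1) := by nlinarith
    _ = (w - 1) * (2 * (w + 1) * aa n w) := by rw [← hgeom]; ring

lemma aa_pos (n : ℕ) {w : ℝ} (hw : 0 < w) : 0 < aa n w :=
  sum_pos (fun j _ => pow_pos hw j) nonempty_range_add_one

lemma cc_le_sq_mul_aa (n : ℕ) {w : ℝ} (hw : 0 ≤ w) : cc n w ≤ (n : ℝ) ^ 2 * aa n w := by
  rw [cc, aa, mul_sum]
  refine sum_le_sum fun j hj => ?_
  have hjn : (j : ℝ) ≤ n := by exact_mod_cast Nat.lt_succ_iff.mp (mem_range.mp hj)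
  gcongr

lemma F_nonneg (n : ℕ) (w : ℝ) : 0 ≤ F n w := by
  unfold F
  positivity

lemma F_le_div_sub_one {n : ℕ} (hn : 0 < n) {w : ℝ} (hw : 1 + 1 / (n : ℝ) ≤ w) :
    F n w ≤ n / (w - 1) := by
  have hw1 : 1 < w := (lt_add_of_pos_right 1 (by positivity)).trans_le hw
  have ha := aa_pos n (by linarith : 0 < w)
  have hrms : √(cc n w / aa n w) ≤ n := by
    rw [sqrt_le_left (Nat.cast_nonneg n), div_le_iff₀ ha]
    exact cc_le_sq_mul_aa n (by linarith)
  have hmoment : topMoment n w ≤ 4 * w * aa n w / (w - 1) ^ 2 := by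
    rw [le_div_iff₀ (by nlinarith), mul_comm]
    nlinarith [sub_one_sq_mul_topMoment_le hn hw]
  have hvar : √((aa n w * cc n w - bb n w ^ 2) / (w * aa n w ^ 2)) ≤ 2 / (w - 1) := by
    rw [sqrt_le_left (by have := sub_pos.mpr hw1; positivity), div_le_iff₀ (by positivity)]
    calc aa n w * cc n w - bb n w ^ 2 ≤ aa n w * topMoment n w := aa_mul_cc_sub_sq_le n w
      _ ≤ aa n w * (4 * w * aa n w / (w - 1) ^ 2) := by gcongr
      _ = (2 / (w - 1)) ^ 2 * (w * aa n w ^ 2) := by rw [div_pow]; ring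
  have hsqrt : 1 ≤ √w := one_le_sqrt.mpr hw1.le
  calc F n w ≤ 1 / (2 * 1) * n * (2 / (w - 1)) := by unfold F; gcongr
    _ = n / (w - 1) := by ring

lemma intervalIntegral.integral_mono_of_nonneg_on {f g : ℝ → ℝ} {a b : ℝ} (hab : a ≤ b)
    (hf : ∀ x ∈ Set.Ioc a b, 0 ≤ f x) (hg : IntervalIntegrable g volume a b)
    (hfg : ∀ x ∈ Set.Ioc a b, f x ≤ g x) : ∫ x in a..b, f x ≤ ∫ x in a..b, g x := by
  rw [intervalIntegral.integral_of_le hab, intervalIntegral.integral_of_le hab]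
  exact integral_mono_of_nonneg
    (ae_restrict_of_forall_mem measurableSet_Ioc hf) hg.1
    (ae_restrict_of_forall_mem measurableSet_Ioc hfg)

lemma intervalIntegrable_div_sub_one (c : ℝ) {u v : ℝ} (hu : 1 < u) (hv : 1 < v) :
    IntervalIntegrable (fun w => c / (w - 1)) volume u v := by
  refine ContinuousOn.intervalIntegrable (continuousOn_const.div (by fun_prop) fun w hw => ?_)
  have : 1 < w := lt_of_lt_of_le (lt_min hu hv) hw.1
  exact sub_ne_zero.mpr this.ne'

lemma integral_div_sub_one (c : ℝ) {u v : ℝ} (hu : 1 < u) (hv : 1 < v) :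
    ∫ w in u..v, c / (w - 1) = c * log ((v - 1) / (u - 1)) := by
  simp_rw [div_eq_mul_inv c]
  rw [intervalIntegral.integral_const_mul, intervalIntegral.integral_comp_sub_right (fun x => x⁻¹),
    integral_inv_of_pos (by linarith) (by linarith)]

theorem stmt10 : ∃ N : ℕ, ∀ n : ℕ, N ≤ n →
    ∫ w in (1 + 1 / (n : ℝ))..(1 + (Real.log n)^2 / n), F n w ≤
      2 * n * Real.log (Real.log n) := by
  refine ⟨3, fun n hn => ?_⟩
  have hn0 : 0 < n := by omega
  have hn3 : (3 : ℝ) ≤ n := by exact_mod_cast hn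
  have hlog : 1 ≤ log n := by
    rw [le_log_iff_exp_le (by positivity)]
    linarith [exp_one_lt_d9]
  have hu : 1 < 1 + 1 / (n : ℝ) := lt_add_of_pos_right 1 (by positivity)
  have huv : 1 + 1 / (n : ℝ) ≤ 1 + log n ^ 2 / n := by gcongr; nlinarith
  have hv := hu.trans_le huv
  calc ∫ w in (1 + 1 / (n : ℝ))..(1 + log n ^ 2 / n), F n w
      ≤ ∫ w in (1 + 1 / (n : ℝ))..(1 + log n ^ 2 / n), n / (w - 1) :=
        intervalIntegral.integral_mono_of_nonneg_on huv (fun w _ => F_nonneg n w)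
          (intervalIntegrable_div_sub_one _ hu hv) fun w hw => F_le_div_sub_one hn0 hw.1.le
    _ = n * log (log n ^ 2) := by
        rw [integral_div_sub_one _ hu hv]
        congr 2
        field_simp
        ring
    _ = 2 * n * log (log n) := by rw [log_pow]; push_cast; ring
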